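/- Let K be an odd positive integer, ε ≥ 0, Δ ∈ [0,1), m ≥ 0 a real number, and γ : {0,…,K} → [0,1] arbitrary. Define the privacy cost objective f(p, p'; γ) = Σ_{l=0}^{(K−1)/2} ( e^{mε} α_l(p') − α_l(p) ) γ(l) + Σ_{l=(K+1)/2}^{K} ( α_l(p) − e^{mε} α_l(p') ) γ(l) for p, p' ∈ [0,1]^K. Let C(ε,Δ) = { (0,0), (1,1), (0,Δ), (Δ,0), (1−Δ,1), (1,1−Δ), ((e^ε+Δ)/(e^ε+1), (1−Δ)/(e^ε+1)), ((1−Δ)/(e^ε+1), (e^ε+Δ)/(e^ε+1)) }. Then for every p, p' ∈ [0,1]^K with (p_i, p_i') ∈ F(ε,Δ) for all i, there exist q, q' ∈ [0,1]^K with (q_i, q_i') ∈ C(ε,Δ) for all i such that f(p, p'; γ) ≤ f(q, q'; γ). That is, the maximum of f over the product of feasible regions is attained at a point where every coordinate pair lies among the eight listed corner points. -/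

import Mathlib

open Finset

/-- Poisson–Binomial probability mass at `l` for parameters `p : Fin K → ℝ`. -/
noncomputable def alphaPB (K : ℕ) (p : Fin K → ℝ) (l : ℕ) : ℝ :=
  ∑ A ∈ Finset.powersetCard l (Finset.univ : Finset (Fin K)),
    (∏ i ∈ A, p i) * ∏ j ∈ Aᶜ, (1 - p j)

/-- The feasible region `F(ε,Δ)`: pairs `(p,p') ∈ [0,1]²` consistent with
`(ε,Δ)`-differential privacy. -/
def Feas (ε Δ p p' : ℝ) : Prop :=
  0 ≤ p ∧ p ≤ 1 ∧ 0 ≤ p' ∧ p' ≤ 1 ∧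
  p ≤ Real.exp ε * p' + Δ ∧ p' ≤ Real.exp ε * p + Δ ∧
  1 - p ≤ Real.exp ε * (1 - p') + Δ ∧ 1 - p' ≤ Real.exp ε * (1 - p) + Δ

/-- The eight corner points of the feasible region `F(ε,Δ)`. -/
noncomputable def Corners (ε Δ : ℝ) : Set (ℝ × ℝ) :=
  {(0, 0), (1, 1), (0, Δ), (Δ, 0), (1 - Δ, 1), (1, 1 - Δ),
   ((Real.exp ε + Δ) / (Real.exp ε + 1), (1 - Δ) / (Real.exp ε + 1)),
   ((1 - Δ) / (Real.exp ε + 1), (Real.exp ε + Δ) / (Real.exp ε + 1))}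

/-- The privacy cost objective `f(p, p'; γ)`. -/
noncomputable def privCost (K : ℕ) (m ε : ℝ) (γ : ℕ → ℝ) (p p' : Fin K → ℝ) : ℝ :=
  (∑ l ∈ Finset.range ((K + 1) / 2),
      (Real.exp (m * ε) * alphaPB K p' l - alphaPB K p l) * γ l)
  + ∑ l ∈ Finset.Icc ((K + 1) / 2) K,
      (alphaPB K p l - Real.exp (m * ε) * alphaPB K p' l) * γ l
/-!
With the other coordinates fixed, each `α_l(p)` is affine in `p_i`, and `f` depends on `p`
and `p'` through separate sums, so `f` is `const + b p_i + c p'_i` in the pair `(p_i, p'_i)`.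
A linear functional on the polygon `F(ε,Δ)` is maximised at one of its vertices, which all
lie in `C(ε,Δ)`; replacing the pairs by such maximising corners one coordinate at a time
never decreases `f`.
-/

open Function Real

theorem exists_forall_mem_le_of_update {ι β α : Type*} [Fintype ι] [DecidableEq ι]
    [Preorder α] {P C : Set β} (g : (ι → β) → α)
    (hg : ∀ z i, z i ∈ P → ∃ c ∈ C, g z ≤ g (update z i c)) (x : ι → β) (hx : ∀ i, x i ∈ P) :
    ∃ z : ι → β, (∀ i, z i ∈ C) ∧ g x ≤ g z := by
  suffices h : ∀ s : Finset ι, ∃ z : ι → β, (∀ i ∈ s, z i ∈ C) ∧ (∀ i ∉ s, z i = x i) ∧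
      g x ≤ g z by
    obtain ⟨z, hzC, -, hle⟩ := h univ
    exact ⟨z, fun i => hzC i (mem_univ i), hle⟩
  intro s
  induction s using Finset.induction_on with
  | empty => exact ⟨x, by simp, fun _ _ => rfl, le_rfl⟩
  | insert i s hi ih =>
    obtain ⟨z, hzC, hzx, hle⟩ := ih
    obtain ⟨c, hc, hgc⟩ := hg z i (hzx i hi ▸ hx i)
    refine ⟨update z i c, fun j hj => ?_, fun j hj => ?_, hle.trans hgc⟩
    · rcases eq_or_ne j i with rfl | hji
      · simpa using hc
      · rw [update_of_ne hji]
        exact hzC j (mem_of_mem_insert_of_ne hj hji)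
    · obtain ⟨hji, hjs⟩ : j ≠ i ∧ j ∉ s := by simpa using hj
      rw [update_of_ne hji]
      exact hzx j hjs

theorem prod_apply_update_of_affine {ι R : Type*} [Fintype ι] [DecidableEq ι] [CommRing R]
    (h : ι → R → R) (p : ι → R) (i : ι) (hi : ∀ s, h i s = (1 - s) * h i 0 + s * h i 1)
    (t : R) :
    ∏ j, h j (update p i t j)
      = (1 - t) * ∏ j, h j (update p i 0 j) + t * ∏ j, h j (update p i 1 j) := by
  simp only [apply_update h, prod_update_of_mem (mem_univ i)]
  rw [hi t]
  ring

lemma alphaPB_update (K : ℕ) (p : Fin K → ℝ) (i : Fin K) (l : ℕ) (t : ℝ) :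
    alphaPB K (update p i t) l
      = (1 - t) * alphaPB K (update p i 0) l + t * alphaPB K (update p i 1) l := by
  have term (A : Finset (Fin K)) (q : Fin K → ℝ) :
      (∏ j ∈ A, q j) * ∏ j ∈ Aᶜ, (1 - q j) = ∏ j, if j ∈ A then q j else 1 - q j := by
    rw [prod_ite, filter_mem_eq_inter, univ_inter, filter_notMem_eq_sdiff, compl_eq_univ_sdiff]
  simp only [alphaPB, term, mul_sum, ← sum_add_distrib]
  refine sum_congr rfl fun A _ => ?_
  exact prod_apply_update_of_affine (fun j s => if j ∈ A then s else 1 - s) p i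
    (fun s => by split_ifs <;> ring) t

noncomputable def signedMass (K : ℕ) (γ : ℕ → ℝ) (p : Fin K → ℝ) : ℝ :=
  ∑ l ∈ Icc ((K + 1) / 2) K, alphaPB K p l * γ l
    - ∑ l ∈ range ((K + 1) / 2), alphaPB K p l * γ l

lemma privCost_eq_signedMass (K : ℕ) (m ε : ℝ) (γ : ℕ → ℝ) (p p' : Fin K → ℝ) :
    privCost K m ε γ p p' = signedMass K γ p - exp (m * ε) * signedMass K γ p' := by
  simp only [privCost, signedMass, sub_mul, sum_sub_distrib, mul_sub, mul_sum, mul_assoc]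
  ring

lemma signedMass_update (K : ℕ) (γ : ℕ → ℝ) (p : Fin K → ℝ) (i : Fin K) (t : ℝ) :
    signedMass K γ (update p i t)
      = (1 - t) * signedMass K γ (update p i 0) + t * signedMass K γ (update p i 1) := by
  simp only [signedMass, alphaPB_update K p i _ t, add_mul, mul_assoc, sum_add_distrib,
    ← mul_sum]
  ring

lemma exists_privCost_update_eq (K : ℕ) (m ε : ℝ) (γ : ℕ → ℝ) (p p' : Fin K → ℝ)
    (i : Fin K) :
    ∃ a b c : ℝ, ∀ x y,
      privCost K m ε γ (update p i x) (update p' i y) = a + b * x + c * y := by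
  set S := signedMass K γ
  set E := exp (m * ε)
  refine ⟨S (update p i 0) - E * S (update p' i 0), S (update p i 1) - S (update p i 0),
    -E * (S (update p' i 1) - S (update p' i 0)), fun x y => ?_⟩
  rw [privCost_eq_signedMass, signedMass_update K γ p i x, signedMass_update K γ p' i y]
  ring

lemma Feas.symm {ε Δ x y : ℝ} (h : Feas ε Δ x y) : Feas ε Δ y x :=
  let ⟨h1, h2, h3, h4, h5, h6, h7, h8⟩ := h
  ⟨h3, h4, h1, h2, h6, h5, h8, h7⟩

lemma swap_mem_corners {ε Δ : ℝ} {c : ℝ × ℝ} (h : c ∈ Corners ε Δ) :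
    c.swap ∈ Corners ε Δ := by
  obtain ⟨u, v⟩ := c
  simp only [Corners, Set.mem_insert_iff, Set.mem_singleton_iff, Prod.swap_prod_mk,
    Prod.mk.injEq] at h ⊢
  tauto

lemma mem_Icc_of_mem_corners {ε Δ : ℝ} (hΔ0 : 0 ≤ Δ) (hΔ1 : Δ ≤ 1) {c : ℝ × ℝ}
    (h : c ∈ Corners ε Δ) : c.1 ∈ Set.Icc 0 1 ∧ c.2 ∈ Set.Icc 0 1 := by
  have hE : 0 < exp ε := exp_pos ε
  simp only [Corners, Set.mem_insert_iff, Set.mem_singleton_iff] at h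
  rcases h with rfl | rfl | rfl | rfl | rfl | rfl | rfl | rfl <;>
    refine ⟨⟨?_, ?_⟩, ⟨?_, ?_⟩⟩ <;>
    first
    | (dsimp only; linarith)
    | (apply div_nonneg <;> linarith)
    | (rw [div_le_one (by linarith)]; linarith)

lemma exists_mem_corners_le_of_nonneg_of_nonpos {ε Δ a b x y : ℝ} (ha : 0 ≤ a) (hb : b ≤ 0)
    (hF : Feas ε Δ x y) : ∃ c ∈ Corners ε Δ, a * x + b * y ≤ a * c.1 + b * c.2 := by
  obtain ⟨-, hx1, hy0, -, hxy, -, -, hyx⟩ := hF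
  set E := exp ε
  rcases le_or_gt 0 (a + b * E) with h1 | h1
  · refine ⟨(1, 1 - Δ), by simp [Corners], ?_⟩
    nlinarith [mul_nonneg h1 (sub_nonneg.2 hx1), mul_nonneg (neg_nonneg.2 hb) (sub_nonneg.2 hyx)]
  rcases le_or_gt 0 (a * E + b) with h2 | h2
  · have hE : 1 < E := by
      by_contra! hE
      nlinarith [mul_nonneg (by linarith : 0 ≤ a - b) (by linarith : 0 ≤ 1 - E)]
    set u := (E + Δ) / (E + 1)
    set v := (1 - Δ) / (E + 1)
    have hE1 : E + 1 ≠ 0 := by linarith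
    have hu : u - E * v = Δ := by simp only [u, v]; field_simp; ring
    have hv : E * u - v = E - 1 + Δ := by simp only [u, v]; field_simp; ring
    refine ⟨(u, v), by simp [Corners, u, v, E], ?_⟩
    -- `(E² - 1) • (a, b)` is a nonnegative combination of the normals of the active constraints
    have key : (E ^ 2 - 1) * (a * x + b * y) ≤ (E ^ 2 - 1) * (a * u + b * v) := calc
      (E ^ 2 - 1) * (a * x + b * y)
          = -(a + b * E) * (x - E * y) + (a * E + b) * (E * x - y) := by ring
      _ ≤ -(a + b * E) * Δ + (a * E + b) * (E - 1 + Δ) :=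
        add_le_add (mul_le_mul_of_nonneg_left (by linarith) (by linarith))
          (mul_le_mul_of_nonneg_left (by linarith) h2)
      _ = (E ^ 2 - 1) * (a * u + b * v) := by rw [← hv, ← hu]; ring
    exact le_of_mul_le_mul_left key (by nlinarith)
  · refine ⟨(Δ, 0), by simp [Corners], ?_⟩
    nlinarith [mul_nonneg ha (sub_nonneg.2 hxy), mul_nonpos_of_nonpos_of_nonneg h2.le hy0]

lemma exists_mem_corners_le {ε Δ x y : ℝ} (a b : ℝ) (hF : Feas ε Δ x y) :
    ∃ c ∈ Corners ε Δ, a * x + b * y ≤ a * c.1 + b * c.2 := by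
  have ⟨hx0, hx1, hy0, hy1, _⟩ := hF
  rcases le_or_gt 0 a with ha | ha <;> rcases le_or_gt 0 b with hb | hb
  · exact ⟨(1, 1), by simp [Corners], by dsimp only; nlinarith⟩
  · exact exists_mem_corners_le_of_nonneg_of_nonpos ha hb.le hF
  · obtain ⟨c, hc, hle⟩ := exists_mem_corners_le_of_nonneg_of_nonpos hb ha.le hF.symm
    exact ⟨c.swap, swap_mem_corners hc, by dsimp only [Prod.fst_swap, Prod.snd_swap]; linarith⟩
  · exact ⟨(0, 0), by simp [Corners], by dsimp only; nlinarith⟩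

lemma exists_mem_corners_privCost_le_update {K : ℕ} {ε Δ : ℝ} (m : ℝ) (γ : ℕ → ℝ)
    {z : Fin K → ℝ × ℝ} {i : Fin K} (hz : Feas ε Δ (z i).1 (z i).2) :
    ∃ c ∈ Corners ε Δ, privCost K m ε γ (Prod.fst ∘ z) (Prod.snd ∘ z)
      ≤ privCost K m ε γ (Prod.fst ∘ update z i c) (Prod.snd ∘ update z i c) := by
  obtain ⟨a, b, d, h⟩ := exists_privCost_update_eq K m ε γ (Prod.fst ∘ z) (Prod.snd ∘ z) i
  obtain ⟨c, hc, hle⟩ := exists_mem_corners_le b d hz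
  have h₀ := h ((Prod.fst ∘ z) i) ((Prod.snd ∘ z) i)
  rw [update_eq_self, update_eq_self, comp_apply, comp_apply] at h₀
  exact ⟨c, hc, by rw [comp_update, comp_update, h₀, h]; linarith⟩

theorem statement6 (K : ℕ)
    (ε Δ m : ℝ) (hΔ0 : 0 ≤ Δ) (hΔ1 : Δ < 1)
    (γ : ℕ → ℝ) :
    ∀ p p' : Fin K → ℝ, (∀ i, Feas ε Δ (p i) (p' i)) →
      ∃ q q' : Fin K → ℝ,
        (∀ i, 0 ≤ q i ∧ q i ≤ 1) ∧ (∀ i, 0 ≤ q' i ∧ q' i ≤ 1) ∧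
        (∀ i, (q i, q' i) ∈ Corners ε Δ) ∧
        privCost K m ε γ p p' ≤ privCost K m ε γ q q' := by
  intro p p' hF
  obtain ⟨z, hzC, hle⟩ := exists_forall_mem_le_of_update (P := {c : ℝ × ℝ | Feas ε Δ c.1 c.2})
    (fun z => privCost K m ε γ (Prod.fst ∘ z) (Prod.snd ∘ z))
    (fun _ _ => exists_mem_corners_privCost_le_update m γ) (fun i => (p i, p' i)) hF
  have hz01 i := mem_Icc_of_mem_corners hΔ0 hΔ1.le (hzC i)
  exact ⟨Prod.fst ∘ z, Prod.snd ∘ z, fun i => (hz01 i).1, fun i => (hz01 i).2, hzC, hle⟩
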